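/- arXiv:2603.22533 — 6 statements merged into one kernel-verified Lean document; each statement's English description precedes it below -/
import Mathlib

section
/- Fix an integer x > 1. The balanced count R(x,y) satisfies R(x,y) = (2^{2-x}/(x-2)!) · binom(2x-2, x-1) · y^{x-2} + O(y^{x-3}) as y → ∞. -/
/-!
Split a balanced vector `m` according to its set `S` of negative coordinates: on `S`, `-m` is a
composition of `⌊y/2⌋` into `#S` positive parts, off `S`, `m` is a weak composition of `⌈y/2⌉`
into `x - #S` parts. Stars and bars then gives
`R(x,y) = ∑_r C(x,r) C(⌊y/2⌋-1,r-1) C(⌈y/2⌉+x-r-1,x-r-1)` for `y ≥ 2`.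
Written as falling factorials, each product of two binomials is `1/((r-1)! (x-r-1)!)` times a
product of `x - 2` factors, each within `x - 1` of `y/2`; replacing every factor by `y/2` costs
`O(y^(x-3))`, and Vandermonde's identity `∑_r C(x,r) C(x-2,r-1) = C(2x-2,x-1)` sums the leading
terms. The single value `y = 1` is absorbed into the constant.
-/

open Finset

/-- `balancedCount x y` is the number of integer vectors of length `x` with
ℓ¹-norm `y`, whose positive entries sum to `⌈y/2⌉` and whose negative entries
sum to `-⌊y/2⌋`. -/
noncomputable def balancedCount (x y : ℕ) : ℕ :=
  Nat.card {m : Fin x → ℤ //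
    (∑ i, |m i|) = (y : ℤ) ∧
    (∑ i ∈ Finset.univ.filter (fun i => 0 < m i), m i) = (((y + 1) / 2 : ℕ) : ℤ) ∧
    (∑ i ∈ Finset.univ.filter (fun i => m i < 0), m i) = -(((y / 2 : ℕ)) : ℤ)}

section Counting

variable {ι : Type*} [Fintype ι]

def nonnegIntSumEquiv (s : ℕ) :
    {w : ι → ℤ // (∀ i, 0 ≤ w i) ∧ ∑ i, w i = s} ≃ {f : ι → ℕ // ∑ i, f i = s} where
  toFun w := ⟨fun i => (w.1 i).toNat, by
    have hw := w.2
    zify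
    simpa [Int.toNat_of_nonneg (hw.1 _)] using hw.2⟩
  invFun f := ⟨fun i => f.1 i, fun i => by positivity, by simp only; exact_mod_cast f.2⟩
  left_inv w := by ext i; simp [Int.toNat_of_nonneg (w.2.1 i)]
  right_inv f := by ext i; simp

instance (s : ℕ) : Finite {w : ι → ℤ // (∀ i, 0 ≤ w i) ∧ ∑ i, w i = s} := by
  classical
  exact Finite.of_equiv _ ((nonnegIntSumEquiv s).trans (Sym.equivNatSumOfFintype ι s).symm).symm

theorem natCard_nonneg_int_sum_eq (s : ℕ) :
    Nat.card {w : ι → ℤ // (∀ i, 0 ≤ w i) ∧ ∑ i, w i = s} = (Fintype.card ι + s - 1).choose s := by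
  classical
  rw [Nat.card_congr ((nonnegIntSumEquiv s).trans (Sym.equivNatSumOfFintype ι s).symm),
    Nat.card_eq_fintype_card, Sym.card_sym_eq_choose]

theorem natCard_neg_int_sum_eq (n : ℕ) :
    Nat.card {u : ι → ℤ // (∀ i, u i < 0) ∧ ∑ i, u i = -n} =
      if Fintype.card ι ≤ n then (n - 1).choose (n - Fintype.card ι) else 0 := by
  have e : {u : ι → ℤ // (∀ i, u i < 0) ∧ ∑ i, u i = -n} ≃
      {w : ι → ℤ // (∀ i, 0 ≤ w i) ∧ ∑ i, w i = n - Fintype.card ι} :=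
    Equiv.subtypeEquiv ((Equiv.neg _).trans (Equiv.subRight 1)) fun u => by
      simp only [Equiv.trans_apply, Equiv.neg_apply, Equiv.subRight_apply, Pi.sub_apply,
        Pi.neg_apply, Pi.one_apply, sum_sub_distrib, sum_neg_distrib, sum_const, card_univ,
        nsmul_eq_mul, mul_one]
      exact and_congr (forall_congr' fun i => by omega) (by constructor <;> intro h <;> linarith)
  rw [Nat.card_congr e]
  split_ifs with h
  · rw [show (n : ℤ) - Fintype.card ι = ((n - Fintype.card ι : ℕ) : ℤ) by omega,
      natCard_nonneg_int_sum_eq]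
    congr 1
    omega
  · refine Nat.card_eq_zero.mpr (.inl ⟨fun ⟨w, hw, hsum⟩ => ?_⟩)
    have := sum_nonneg fun i (_ : i ∈ univ) => hw i
    omega

instance (n : ℕ) : Finite {u : ι → ℤ // (∀ i, u i < 0) ∧ ∑ i, u i = -n} :=
  Finite.of_injective (β := {w : ι → ℤ // (∀ i, 0 ≤ w i) ∧ ∑ i, w i = n})
    (fun u => ⟨-u.1, fun i => by simp [(u.2.1 i).le], by simp [u.2.2]⟩)
    fun u v h => Subtype.ext (neg_injective (congrArg Subtype.val h))

theorem sum_abs_eq_sum_filter_pos_sub_sum_filter_neg (m : ι → ℤ) :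
    ∑ i, |m i| = ∑ i ∈ univ.filter (0 < m ·), m i - ∑ i ∈ univ.filter (m · < 0), m i := by
  rw [sum_filter, sum_filter, ← sum_sub_distrib]
  exact sum_congr rfl fun i _ => by split_ifs <;> grind

theorem filter_neg_eq_iff {m : ι → ℤ} {S : Finset ι} :
    univ.filter (m · < 0) = S ↔ (∀ i : S, m i < 0) ∧ ∀ i : {i // i ∉ S}, 0 ≤ m i := by
  constructor
  · rintro rfl
    exact ⟨fun i => (mem_filter.mp i.2).2, fun i => not_lt.mp fun h => i.2 (by simpa using h)⟩
  · rintro ⟨hS, hSc⟩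
    ext i
    by_cases hi : i ∈ S
    · simpa [hi] using hS ⟨i, hi⟩
    · simpa [hi] using hSc ⟨i, hi⟩

variable [DecidableEq ι]

theorem sum_filter_pos_eq_sum_subtype {m : ι → ℤ} {S : Finset ι} (hS : univ.filter (m · < 0) = S) :
    ∑ i ∈ univ.filter (0 < m ·), m i = ∑ i : {i // i ∉ S}, m i := by
  rw [sum_filter, ← sum_subtype (univ.filter (¬ m · < 0)) (fun i => by simp [← hS]), sum_filter]
  exact sum_congr rfl fun i _ => by split_ifs <;> omega

def negSupportFiberEquiv (p n : ℕ) (S : Finset ι) :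
    {m : ι → ℤ // (∑ i ∈ univ.filter (0 < m ·), m i = p ∧
        ∑ i ∈ univ.filter (m · < 0), m i = -n) ∧ univ.filter (m · < 0) = S} ≃
      {u : S → ℤ // (∀ i, u i < 0) ∧ ∑ i, u i = -n} ×
        {v : {i // i ∉ S} → ℤ // (∀ i, 0 ≤ v i) ∧ ∑ i, v i = p} :=
  (Equiv.subtypeEquiv (Equiv.piEquivPiSubtypeProd (· ∈ S) fun _ => ℤ) fun m => by
    simp only [Equiv.piEquivPiSubtypeProd_apply]
    constructor
    · rintro ⟨⟨hpos, hneg⟩, hS⟩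
      rw [sum_filter_pos_eq_sum_subtype hS] at hpos
      rw [hS, ← sum_coe_sort] at hneg
      have := filter_neg_eq_iff.mp hS
      exact ⟨⟨this.1, hneg⟩, this.2, hpos⟩
    · rintro ⟨⟨hS, hneg⟩, hSc, hpos⟩
      have hS' := filter_neg_eq_iff.mpr ⟨hS, hSc⟩
      refine ⟨⟨?_, ?_⟩, hS'⟩
      · rw [sum_filter_pos_eq_sum_subtype hS', hpos]
      · rw [hS', ← sum_coe_sort, hneg]).trans
    Equiv.subtypeProdEquivProd

theorem natCard_balanced_eq_sum (p n : ℕ) :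
    Nat.card {m : ι → ℤ //
        ∑ i ∈ univ.filter (0 < m ·), m i = p ∧ ∑ i ∈ univ.filter (m · < 0), m i = -n} =
      ∑ r ∈ range (Fintype.card ι + 1), (Fintype.card ι).choose r *
        ((if r ≤ n then (n - 1).choose (n - r) else 0) *
          (Fintype.card ι - r + p - 1).choose p) := by
  let e S := (Equiv.subtypeSubtypeEquivSubtypeInter _
    (fun m : ι → ℤ => univ.filter (m · < 0) = S)).trans (negSupportFiberEquiv p n S)
  have : ∀ S, Finite {m : {m : ι → ℤ // ∑ i ∈ univ.filter (0 < m ·), m i = p ∧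
      ∑ i ∈ univ.filter (m · < 0), m i = -n} // univ.filter (m.1 · < 0) = S} :=
    fun S => Finite.of_equiv _ (e S).symm
  have hsizes := sum_powerset_apply_card (x := (univ : Finset ι))
    fun r => (if r ≤ n then (n - 1).choose (n - r) else 0) * (Fintype.card ι - r + p - 1).choose p
  rw [powerset_univ, card_univ] at hsizes
  simp only [smul_eq_mul] at hsizes
  rw [Nat.card_congr (Equiv.sigmaFiberEquiv fun m => univ.filter (m.1 · < 0)).symm, Nat.card_sigma,
    ← hsizes]
  refine sum_congr rfl fun S _ => ?_
  rw [Nat.card_congr (e S), Nat.card_prod, natCard_neg_int_sum_eq, natCard_nonneg_int_sum_eq,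
    Fintype.card_coe, Fintype.card_subtype_compl, Fintype.card_coe]

end Counting

theorem balancedCount_eq_sum (x y : ℕ) :
    balancedCount x y = ∑ r ∈ range (x + 1), x.choose r *
      ((if r ≤ y / 2 then (y / 2 - 1).choose (y / 2 - r) else 0) *
        (x - r + (y + 1) / 2 - 1).choose ((y + 1) / 2)) := by
  have hcount := natCard_balanced_eq_sum (ι := Fin x) ((y + 1) / 2) (y / 2)
  rw [Fintype.card_fin] at hcount
  rw [← hcount, balancedCount]
  refine Nat.card_congr (Equiv.subtypeEquivRight fun m => ?_)
  rw [sum_abs_eq_sum_filter_pos_sub_sum_filter_neg]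
  exact ⟨fun h => h.2, fun h => ⟨by omega, h⟩⟩

theorem balancedCount_add_two_eq_sum (k : ℕ) {y : ℕ} (hy : 2 ≤ y) :
    balancedCount (k + 2) y = ∑ r ∈ range (k + 1), (k + 2).choose (r + 1) *
      ((y / 2 - 1).choose r * ((y + 1) / 2 + (k - r)).choose (k - r)) := by
  rw [balancedCount_eq_sum, sum_range_succ, sum_range_succ']
  have hlast : (k + 2 - (k + 2) + (y + 1) / 2 - 1).choose ((y + 1) / 2) = 0 :=
    Nat.choose_eq_zero_of_lt (by omega)
  have hfirst : (y / 2 - 1).choose (y / 2 - 0) = 0 := Nat.choose_eq_zero_of_lt (by omega)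
  rw [hlast, hfirst]
  simp only [mul_zero, zero_mul, ite_self, add_zero]
  refine sum_congr rfl fun r hr => ?_
  have hr := mem_range.mp hr
  congr 2
  · split_ifs with h
    · exact Nat.choose_symm_of_eq_add (by omega)
    · exact (Nat.choose_eq_zero_of_lt (by omega)).symm
  · rw [show k + 2 - (r + 1) + (y + 1) / 2 - 1 = (y + 1) / 2 + (k - r) by omega,
      Nat.choose_symm_add]

theorem Finset.abs_prod_sub_pow_le {ι α : Type*} [Field α] [LinearOrder α] [IsStrictOrderedRing α]
    (s : Finset ι) (f : ι → α) {t ε : α} (hf : ∀ i ∈ s, |f i - t| ≤ ε) :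
    |∏ i ∈ s, f i - t ^ #s| ≤ #s * ε * (|t| + ε) ^ (#s - 1) := by
  classical
  induction s using Finset.induction_on with
  | empty => simp
  | insert i s hi ih =>
    have hfi := hf i (mem_insert_self i s)
    have ih := ih fun j hj => hf j (mem_insert_of_mem hj)
    have hε : 0 ≤ ε := (abs_nonneg _).trans hfi
    have hfi' : |f i| ≤ |t| + ε := by
      calc |f i| = |(f i - t) + t| := by ring_nf
        _ ≤ |f i - t| + |t| := abs_add_le _ _
        _ ≤ |t| + ε := by linarith
    have ht : |t| ^ #s ≤ (|t| + ε) ^ #s := pow_le_pow_left₀ (abs_nonneg t) (by linarith) _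
    rw [prod_insert hi, card_insert_of_notMem hi, pow_succ', Nat.add_sub_cancel]
    calc |f i * ∏ j ∈ s, f j - t * t ^ #s|
        = |f i * (∏ j ∈ s, f j - t ^ #s) + (f i - t) * t ^ #s| := by ring_nf
      _ ≤ |f i| * |∏ j ∈ s, f j - t ^ #s| + |f i - t| * |t| ^ #s := by
        grw [abs_add_le, abs_mul, abs_mul, abs_pow]
      _ ≤ (|t| + ε) * (#s * ε * (|t| + ε) ^ (#s - 1)) + ε * (|t| + ε) ^ #s := by
        gcongr
      _ = ((#s + 1 : ℕ) : α) * ε * (|t| + ε) ^ #s := by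
        rcases eq_or_ne #s 0 with hs | hs
        · simp [hs]
        · rw [← mul_pow_sub_one hs]; push_cast; ring

open Nat in
theorem abs_choose_mul_choose_sub_le (N P a b : ℕ) {t : ℝ} (hN : |N - t| ≤ 2) (hP : |P - t| ≤ 1) :
    |(N.choose a * (P + b).choose b : ℝ) - t ^ (a + b) / (a ! * b !)| ≤
      (a + b : ℕ) * (a + b + 1 : ℕ) * (|t| + (a + b + 1 : ℕ)) ^ (a + b - 1) := by
  set f : ℕ ⊕ ℕ → ℝ := Sum.elim (fun j => N - j) (fun j => P + b - j)
  have hprod : (N.choose a * (P + b).choose b : ℝ) =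
      (∏ i ∈ (range a).disjSum (range b), f i) / (a ! * b !) := by
    rw [prod_disjSum, Nat.cast_choose_eq_descPochhammer_div,
      Nat.cast_choose_eq_descPochhammer_div, descPochhammer_eval_eq_prod_range,
      descPochhammer_eval_eq_prod_range]
    simp only [f, Sum.elim_inl, Sum.elim_inr]
    push_cast
    ring
  have hf : ∀ i ∈ (range a).disjSum (range b), |f i - t| ≤ a + b + 1 := by
    rintro (j | j) hj <;> simp only [inl_mem_disjSum, inr_mem_disjSum, mem_range] at hj
    · have hj' : (j : ℝ) + 1 ≤ a := by exact_mod_cast hj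
      calc |f (.inl j) - t| = |(N - t) - j| := by simp only [f, Sum.elim_inl]; ring_nf
        _ ≤ |(N : ℝ) - t| + |(j : ℝ)| := abs_sub _ _
        _ ≤ a + b + 1 := by rw [Nat.abs_cast]; linarith [b.cast_nonneg (α := ℝ)]
    · have hj' : (j : ℝ) ≤ b := by exact_mod_cast hj.le
      calc |f (.inr j) - t| = |(P - t) + (b - j)| := by simp only [f, Sum.elim_inr]; ring_nf
        _ ≤ |(P : ℝ) - t| + |(b : ℝ) - j| := abs_add_le _ _
        _ ≤ a + b + 1 := by
          rw [abs_of_nonneg (a := (b : ℝ) - j) (by linarith)]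
          linarith [a.cast_nonneg (α := ℝ), j.cast_nonneg (α := ℝ)]
  have key := abs_prod_sub_pow_le _ f hf
  rw [card_disjSum, card_range, card_range] at key
  have hfact : (1 : ℝ) ≤ a ! * b ! := by exact_mod_cast Nat.one_le_iff_ne_zero.mpr (by positivity)
  rw [hprod, ← sub_div, abs_div, abs_of_pos (a := (a ! * b ! : ℝ)) (by linarith)]
  push_cast at key ⊢
  exact (div_le_self (abs_nonneg _) hfact).trans key

theorem Nat.sum_range_choose_add_one_mul_choose (k : ℕ) :
    ∑ r ∈ range (k + 1), (k + 2).choose (r + 1) * k.choose r = (2 * k + 2).choose (k + 1) := by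
  rw [show 2 * k + 2 = (k + 2) + k by ring, Nat.add_choose_eq,
    Nat.sum_antidiagonal_eq_sum_range_succ (fun i j => (k + 2).choose i * k.choose j),
    Nat.succ_eq_add_one, sum_range_succ' _ (k + 1), Nat.sub_zero, Nat.choose_eq_zero_of_lt (Nat.lt_succ_self k), mul_zero, add_zero]
  refine sum_congr rfl fun r hr => ?_
  rw [Nat.add_sub_add_right, Nat.choose_symm (by simpa [Nat.lt_succ_iff] using hr)]

open Nat in
theorem choose_mul_pow_div_factorial_eq_sum (k : ℕ) (t : ℝ) :
    (2 * k + 2).choose (k + 1) / k ! * t ^ k =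
      ∑ r ∈ range (k + 1), (k + 2).choose (r + 1) * (t ^ k / (r ! * (k - r)!)) := by
  rw [← Nat.sum_range_choose_add_one_mul_choose, Nat.cast_sum, sum_div, sum_mul]
  refine sum_congr rfl fun r hr => ?_
  rw [Nat.cast_mul, Nat.cast_choose ℝ (a := r) (b := k) (by simpa [Nat.lt_succ_iff] using hr)]
  field_simp

open Nat in
theorem abs_choose_half_mul_choose_half_sub_le {r k y : ℕ} (hr : r ≤ k) (hy : 2 ≤ y) :
    |((y / 2 - 1).choose r * ((y + 1) / 2 + (k - r)).choose (k - r) : ℝ) -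
        ((y : ℝ) / 2) ^ k / (r ! * (k - r)!)| ≤
      k * (k + 1) * (k + 2) ^ (k - 1) * (y : ℝ) ^ (k - 1) := by
  have hfloor : (2 * (y / 2 : ℕ) : ℝ) ≤ y ∧ (y : ℝ) ≤ 2 * (y / 2 : ℕ) + 1 := by
    constructor <;> exact_mod_cast (by omega)
  have hceil : (y : ℝ) ≤ 2 * ((y + 1) / 2 : ℕ) ∧ (2 * ((y + 1) / 2 : ℕ) : ℝ) ≤ y + 1 := by
    constructor <;> exact_mod_cast (by omega)
  have hN : |((y / 2 - 1 : ℕ) : ℝ) - y / 2| ≤ 2 := by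
    rw [Nat.cast_sub (by omega), Nat.cast_one, abs_le]
    constructor <;> linarith
  have hP : |(((y + 1) / 2 : ℕ) : ℝ) - y / 2| ≤ 1 := by
    rw [abs_le]
    constructor <;> linarith
  have hbase : |(y : ℝ) / 2| + (k + 1 : ℕ) ≤ (k + 2) * y := by
    have : (2 : ℝ) ≤ y := by exact_mod_cast hy
    rw [abs_of_nonneg (by positivity)]
    push_cast
    nlinarith
  have hchoose := abs_choose_mul_choose_sub_le (y / 2 - 1) ((y + 1) / 2) r (k - r) hN hP
  rw [Nat.add_sub_of_le hr] at hchoose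
  calc _ ≤ _ := hchoose
    _ ≤ (k : ℝ) * (k + 1) * ((k + 2) * y) ^ (k - 1) := by push_cast at hbase ⊢; gcongr
    _ = _ := by rw [mul_pow]; ring

open Nat in
theorem abs_balancedCount_sub_le (k : ℕ) {y : ℕ} (hy : 2 ≤ y) :
    |(balancedCount (k + 2) y : ℝ) - (2 * k + 2).choose (k + 1) / k ! * ((y : ℝ) / 2) ^ k| ≤
      (k + 1) * 2 ^ (k + 2) * (k * (k + 1) * (k + 2) ^ (k - 1)) * (y : ℝ) ^ (k - 1) := by
  rw [balancedCount_add_two_eq_sum k hy, choose_mul_pow_div_factorial_eq_sum, Nat.cast_sum,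
    ← sum_sub_distrib]
  calc _ ≤ _ := abs_sum_le_sum_abs _ _
    _ ≤ ∑ r ∈ range (k + 1),
          2 ^ (k + 2) * (k * (k + 1) * (k + 2) ^ (k - 1) * (y : ℝ) ^ (k - 1)) :=
        sum_le_sum fun r hr => by
          rw [Nat.cast_mul, Nat.cast_mul, ← mul_sub, abs_mul, Nat.abs_cast]
          gcongr
          · exact_mod_cast Nat.choose_le_two_pow _ _
          · exact abs_choose_half_mul_choose_half_sub_le (Nat.lt_succ_iff.mp (mem_range.mp hr)) hy
    _ = _ := by rw [sum_const, card_range, nsmul_eq_mul]; push_cast; ring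

theorem balancedCount_asymptotics (x : ℕ) (hx : 1 < x) :
    ∃ C : ℝ, 0 ≤ C ∧ ∀ y : ℕ, 1 ≤ y →
      |(balancedCount x y : ℝ) -
        (2 : ℝ) ^ ((2 : ℤ) - (x : ℤ)) / (Nat.factorial (x - 2)) *
          ((2 * x - 2).choose (x - 1)) * (y : ℝ) ^ (x - 2)|
        ≤ C * (y : ℝ) ^ (x - 3) := by
  obtain ⟨k, rfl⟩ : ∃ k, x = k + 2 := ⟨x - 2, by omega⟩
  have hmain : ∀ y : ℝ, (2 : ℝ) ^ ((2 : ℤ) - ((k + 2 : ℕ) : ℤ)) / (Nat.factorial (k + 2 - 2)) *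
      ((2 * (k + 2) - 2).choose (k + 2 - 1)) * y ^ (k + 2 - 2) =
        (2 * k + 2).choose (k + 1) / k.factorial * (y / 2) ^ k := fun y => by
    rw [show 2 * (k + 2) - 2 = 2 * k + 2 by omega, Nat.add_sub_cancel, Nat.add_succ_sub_one,
      show (2 : ℤ) - ((k + 2 : ℕ) : ℤ) = -k by push_cast; ring, zpow_neg, zpow_natCast, div_pow]
    ring
  set K : ℝ := (k + 1) * 2 ^ (k + 2) * (k * (k + 1) * (k + 2) ^ (k - 1))
  set D : ℝ :=
    |(balancedCount (k + 2) 1 : ℝ) - (2 * k + 2).choose (k + 1) / k.factorial * (1 / 2) ^ k|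
  refine ⟨K + D, by positivity, fun y hy => ?_⟩
  rw [hmain, show k + 2 - 3 = k - 1 by omega]
  rcases (show y = 1 ∨ 2 ≤ y by omega) with rfl | hy
  · simp only [Nat.cast_one, one_pow, mul_one]
    exact le_add_of_nonneg_left (by positivity)
  · calc _ ≤ K * (y : ℝ) ^ (k - 1) := abs_balancedCount_sub_le k hy
      _ ≤ (K + D) * (y : ℝ) ^ (k - 1) := by gcongr; exact le_add_of_nonneg_right (abs_nonneg _)
end

section
/- The number of lattice points in the closed ℓ¹-ball of radius n in ℤ^k, i.e. Σ_{l=0}^{n} N(k,l), satisfies Σ_{l=0}^{n} N(k,l) ≤ T^{-n} · ((1+T)/(1-T))^k for every real T ∈ (0,1). In particular, taking k = n and T = √2 - 1, the number of points of ℤ^n of ℓ¹-norm at most n is at most (3 + 2√2)^n. -/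
/-- `latticeShellCount x y` is the number of integer vectors of length `x`
with ℓ¹-norm equal to `y`. -/
noncomputable def latticeShellCount (x y : ℕ) : ℕ :=
  Nat.card {m : Fin x → ℤ // (∑ i, |m i|) = (y : ℤ)}

/-!
Rankin's trick: for `0 < T ≤ 1` every point of the ℓ¹-ball of radius `n` has weight
`T ^ ‖m‖₁ ≥ T ^ n`, so `T ^ n` times the number of such points is at most the total weight of the
box `[-n, n]^k`. That weight factorises over coordinates as `(∑_{|a| ≤ n} T ^ |a|) ^ k`, and the
one-dimensional sum is bounded by the full series `∑_{a ∈ ℤ} T ^ |a| = (1 + T) / (1 - T)`.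
-/

open Finset

section

variable {ι : Type*} [Fintype ι]

def l1Norm (m : ι → ℤ) : ℕ := ∑ i, (m i).natAbs

lemma natAbs_le_l1Norm (m : ι → ℤ) (i : ι) : (m i).natAbs ≤ l1Norm m :=
  single_le_sum (f := fun i => (m i).natAbs) (fun _ _ => Nat.zero_le _) (mem_univ i)

lemma natCast_l1Norm (m : ι → ℤ) : (l1Norm m : ℤ) = ∑ i, |m i| := by
  simp [l1Norm]

lemma pow_l1Norm {M : Type*} [CommMonoid M] (T : M) (m : ι → ℤ) :
    T ^ l1Norm m = ∏ i, T ^ (m i).natAbs :=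
  (prod_pow_eq_pow_sum _ _ _).symm

variable [DecidableEq ι]

-- The box condition follows from the norm bound; it only serves to exhibit a `Finset`.
variable (ι) in
noncomputable def latticeBall (n : ℕ) : Finset (ι → ℤ) :=
  {m ∈ Fintype.piFinset fun _ => Icc (-(n : ℤ)) n | l1Norm m ≤ n}

lemma mem_latticeBall {n : ℕ} {m : ι → ℤ} : m ∈ latticeBall ι n ↔ l1Norm m ≤ n := by
  simp only [latticeBall, mem_filter, Fintype.mem_piFinset, mem_Icc, and_iff_right_iff_imp]
  intro h i
  have := (natAbs_le_l1Norm m i).trans h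
  omega

end

lemma hasSum_pow_natAbs {T : ℝ} (hT0 : 0 ≤ T) (hT1 : T < 1) :
    HasSum (fun a : ℤ => T ^ a.natAbs) ((1 + T) / (1 - T)) := by
  have hgeom := hasSum_geometric_of_lt_one hT0 hT1
  have hneg : HasSum (fun n : ℕ => T ^ (-((n : ℤ) + 1)).natAbs) (T * (1 - T)⁻¹) := by
    refine (hgeom.mul_left T).congr_fun fun n => ?_
    rw [← pow_succ']
    congr 1
  have hsum : (1 - T)⁻¹ + T * (1 - T)⁻¹ = (1 + T) / (1 - T) := by ring
  exact hsum ▸ hgeom.of_nat_of_neg_add_one hneg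

lemma sum_pow_natAbs_le {T : ℝ} (hT0 : 0 ≤ T) (hT1 : T < 1) (s : Finset ℤ) :
    ∑ a ∈ s, T ^ a.natAbs ≤ (1 + T) / (1 - T) :=
  sum_le_hasSum s (fun _ _ => by positivity) (hasSum_pow_natAbs hT0 hT1)

lemma card_latticeBall_le {ι : Type*} [Fintype ι] [DecidableEq ι] {T : ℝ} (hT0 : 0 < T)
    (hT1 : T < 1) (n : ℕ) :
    (#(latticeBall ι n) : ℝ) ≤ ((1 + T) / (1 - T)) ^ Fintype.card ι / T ^ n := by
  rw [le_div_iff₀ (pow_pos hT0 n)]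
  calc (#(latticeBall ι n) : ℝ) * T ^ n = ∑ _m ∈ latticeBall ι n, T ^ n := by
        rw [sum_const, nsmul_eq_mul]
    _ ≤ ∑ m ∈ latticeBall ι n, T ^ l1Norm m :=
        sum_le_sum fun _ hm => pow_le_pow_of_le_one hT0.le hT1.le (mem_latticeBall.1 hm)
    _ ≤ ∑ m ∈ Fintype.piFinset fun _ : ι => Icc (-(n : ℤ)) n, T ^ l1Norm m :=
        sum_le_sum_of_subset_of_nonneg (filter_subset _ _) fun _ _ _ => by positivity
    _ = (∑ a ∈ Icc (-(n : ℤ)) n, T ^ a.natAbs) ^ Fintype.card ι := by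
        simp only [pow_l1Norm]
        rw [sum_prod_piFinset _ fun _ (a : ℤ) => T ^ a.natAbs, prod_const, card_univ]
    _ ≤ ((1 + T) / (1 - T)) ^ Fintype.card ι := by
        gcongr
        exact sum_pow_natAbs_le hT0.le hT1 _

lemma latticeShellCount_eq_card_filter {k l n : ℕ} (hl : l ≤ n) :
    latticeShellCount k l = #{m ∈ latticeBall (Fin k) n | l1Norm m = l} := by
  refine Nat.subtype_card _ fun m => ?_
  rw [mem_filter, mem_latticeBall, ← natCast_l1Norm, Nat.cast_inj]
  exact ⟨fun h => h.2, fun h => ⟨h ▸ hl, h⟩⟩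

lemma sum_latticeShellCount (k n : ℕ) :
    ∑ l ∈ range (n + 1), latticeShellCount k l = #(latticeBall (Fin k) n) := by
  rw [card_eq_sum_card_fiberwise (f := l1Norm) (t := range (n + 1))]
  · exact sum_congr rfl fun l hl =>
      latticeShellCount_eq_card_filter (Nat.lt_succ_iff.1 (mem_range.1 hl))
  · exact fun m hm => mem_range.2 (Nat.lt_succ_of_le (mem_latticeBall.1 hm))

theorem lattice_ball_count_bound :
    (∀ k n : ℕ, ∀ T : ℝ, 0 < T → T < 1 →
      ((∑ l ∈ Finset.range (n + 1), latticeShellCount k l : ℕ) : ℝ) ≤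
        ((1 + T) / (1 - T)) ^ k / T ^ n) ∧
    (∀ n : ℕ,
      ((∑ l ∈ Finset.range (n + 1), latticeShellCount n l : ℕ) : ℝ) ≤
        (3 + 2 * Real.sqrt 2) ^ n) := by
  have ball_bound : ∀ k n : ℕ, ∀ T : ℝ, 0 < T → T < 1 →
      ((∑ l ∈ Finset.range (n + 1), latticeShellCount k l : ℕ) : ℝ) ≤
        ((1 + T) / (1 - T)) ^ k / T ^ n := by
    intro k n T hT0 hT1
    simpa [sum_latticeShellCount] using card_latticeBall_le (ι := Fin k) hT0 hT1 n
  refine ⟨ball_bound, fun n => ?_⟩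
  have hsq : Real.sqrt 2 ^ 2 = 2 := Real.sq_sqrt zero_le_two
  have hlo : 1 < Real.sqrt 2 := by nlinarith [Real.sqrt_nonneg 2]
  have hhi : Real.sqrt 2 < 2 := by nlinarith
  -- `T = √2 - 1` minimises `(1 + T) / ((1 - T) T)` on `(0, 1)`
  have hopt : (1 + (Real.sqrt 2 - 1)) / (1 - (Real.sqrt 2 - 1)) / (Real.sqrt 2 - 1) =
      3 + 2 * Real.sqrt 2 := by
    rw [div_div, div_eq_iff (by nlinarith)]
    nlinarith
  calc _ ≤ ((1 + (Real.sqrt 2 - 1)) / (1 - (Real.sqrt 2 - 1))) ^ n / (Real.sqrt 2 - 1) ^ n :=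
        ball_bound n n _ (by linarith) (by linarith)
    _ = (3 + 2 * Real.sqrt 2) ^ n := by rw [← div_pow, hopt]
end

section
/- Let a_n = Σ_{s=1}^{n-1} 2^s · binom(n-1, s)². Then limsup_{n→∞} a_n^{1/n} ≥ 3 + 2√2. (In fact, combined with the upper bound Σ_{l=0}^n N(n,l) ≤ (3+2√2)^n, the limit of a_n^{1/n} equals 3 + 2√2.) -/
/-!
Put `y_s = √2 ^ s * choose m s` with `m = n - 1`, so that `a_n + 1 = ∑_{s ≤ m} y_s ^ 2` and,
by the binomial theorem, `∑_{s ≤ m} y_s = (1 + √2) ^ m`. For nonnegative terms,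
`(∑ y_s) ^ 2 / (m + 1) ≤ ∑ y_s ^ 2 ≤ (∑ y_s) ^ 2` (Cauchy–Schwarz on the left), and
`(1 + √2) ^ 2 = 3 + 2√2`. Hence `a_n` lies between `(3 + 2√2) ^ n` and that power divided by a
linear function of `n`, and the `n`-th root of a linear function tends to `1`.
-/

open Finset Real Filter Topology

theorem sum_range_pow_mul_choose (t : ℝ) (m : ℕ) :
    ∑ s ∈ range (m + 1), t ^ s * m.choose s = (t + 1) ^ m := by
  simp [add_pow]

theorem sum_range_sq_pow_mul_choose_le {t : ℝ} (ht : 0 ≤ t) (m : ℕ) :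
    ∑ s ∈ range (m + 1), (t ^ s * m.choose s) ^ 2 ≤ ((t + 1) ^ m) ^ 2 :=
  sum_range_pow_mul_choose t m ▸ sum_sq_le_sq_sum_of_nonneg fun _ _ => by positivity

theorem pow_sq_le_mul_sum_range_sq_pow_mul_choose (t : ℝ) (m : ℕ) :
    ((t + 1) ^ m) ^ 2 ≤ (m + 1) * ∑ s ∈ range (m + 1), (t ^ s * m.choose s) ^ 2 := by
  simpa [sum_range_pow_mul_choose] using sq_sum_le_card_mul_sum_sq (s := range (m + 1))
    (f := fun s => t ^ s * m.choose s)

theorem sqrt_two_pow_mul_choose_sq (m s : ℕ) :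
    (√2 ^ s * m.choose s) ^ 2 = 2 ^ s * (m.choose s : ℝ) ^ 2 := by
  rw [mul_pow, ← pow_mul, mul_comm s, pow_mul, sq_sqrt zero_le_two]

theorem sqrt_two_add_one_pow_sq (m : ℕ) : ((√2 + 1) ^ m) ^ 2 = (3 + 2 * √2) ^ m := by
  rw [← pow_mul, mul_comm, pow_mul]
  congr 1
  nlinarith [sq_sqrt (zero_le_two : (0 : ℝ) ≤ 2)]

theorem sum_two_pow_mul_choose_sq_le (m : ℕ) :
    ∑ s ∈ range (m + 1), 2 ^ s * (m.choose s : ℝ) ^ 2 ≤ (3 + 2 * √2) ^ m := by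
  simpa [sqrt_two_pow_mul_choose_sq, sqrt_two_add_one_pow_sq] using
    sum_range_sq_pow_mul_choose_le (sqrt_nonneg 2) m

theorem pow_le_mul_sum_two_pow_mul_choose_sq (m : ℕ) :
    (3 + 2 * √2) ^ m ≤ (m + 1) * ∑ s ∈ range (m + 1), 2 ^ s * (m.choose s : ℝ) ^ 2 := by
  simpa [sqrt_two_pow_mul_choose_sq, sqrt_two_add_one_pow_sq] using
    pow_sq_le_mul_sum_range_sq_pow_mul_choose √2 m

theorem tendsto_const_rpow_one_div_nat {K : ℝ} (hK : 0 < K) :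
    Tendsto (fun n : ℕ => K ^ (1 / (n : ℝ))) atTop (𝓝 1) := by
  simpa only [Function.comp_def, rpow_zero] using
    (continuousAt_const_rpow hK.ne').tendsto.comp tendsto_one_div_atTop_nhds_zero_nat

theorem tendsto_mul_natCast_rpow_one_div {K : ℝ} (hK : 0 < K) :
    Tendsto (fun n : ℕ => (K * n) ^ (1 / (n : ℝ))) atTop (𝓝 1) := by
  have hn : Tendsto (fun n : ℕ => (n : ℝ) ^ (1 / (n : ℝ))) atTop (𝓝 1) :=
    tendsto_rpow_div.comp tendsto_natCast_atTop_atTop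
  simpa [mul_rpow hK.le (Nat.cast_nonneg _)] using (tendsto_const_rpow_one_div_nat hK).mul hn

theorem tendsto_rpow_one_div_of_pow_div_le_of_le_pow {u : ℕ → ℝ} {c K : ℝ} (hc : 0 < c)
    (hK : 0 < K) (hlow : ∀ᶠ n in atTop, c ^ n / (K * n) ≤ u n)
    (hup : ∀ᶠ n in atTop, u n ≤ c ^ n) :
    Tendsto (fun n : ℕ => u n ^ (1 / (n : ℝ))) atTop (𝓝 c) := by
  have hroot : ∀ n : ℕ, n ≠ 0 → (c ^ n) ^ (1 / (n : ℝ)) = c := fun n hn => by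
    rw [one_div, pow_rpow_inv_natCast hc.le hn]
  have hlim : Tendsto (fun n : ℕ => (c ^ n / (K * n)) ^ (1 / (n : ℝ))) atTop (𝓝 c) := by
    have := (tendsto_mul_natCast_rpow_one_div hK).inv₀ one_ne_zero |>.const_mul c
    rw [inv_one, mul_one] at this
    refine this.congr' ?_
    filter_upwards [eventually_ne_atTop 0] with n hn
    rw [div_rpow (by positivity) (by positivity), hroot n hn]
    exact (div_eq_mul_inv _ _).symm
  refine tendsto_of_tendsto_of_tendsto_of_le_of_le' hlim tendsto_const_nhds ?_ ?_
  · filter_upwards [hlow] with n hn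
    exact rpow_le_rpow (by positivity) hn (by positivity)
  · filter_upwards [hlow, hup, eventually_ne_atTop 0] with n hlo hhi hn
    exact (rpow_le_rpow (le_trans (by positivity) hlo) hhi (by positivity)).trans_eq (hroot n hn)

theorem pow_div_le_sum_two_pow_mul_choose_sq_sub_one {m : ℕ} (hm : 1 ≤ m) :
    (3 + 2 * √2) ^ (m + 1) / (2 * (3 + 2 * √2) * (m + 1 : ℕ)) ≤
      ∑ s ∈ range (m + 1), 2 ^ s * (m.choose s : ℝ) ^ 2 - 1 := by
  have hT := pow_le_mul_sum_two_pow_mul_choose_sq m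
  set c : ℝ := 3 + 2 * √2
  set T := ∑ s ∈ range (m + 1), 2 ^ s * (m.choose s : ℝ) ^ 2
  have hc : 5 ≤ c := by have := one_le_sqrt.2 one_le_two; linarith
  have hm' : (1 : ℝ) ≤ m := by exact_mod_cast hm
  -- Bernoulli: `c ^ m ≥ 1 + 4 m ≥ 2 (m + 1)`, so dropping the term `1` costs at most `T / 2`.
  have hbig : 2 * (m + 1) ≤ c ^ m := by
    have := one_add_mul_le_pow (a := c - 1) (by linarith) m
    rw [add_sub_cancel] at this
    nlinarith
  rw [Nat.cast_succ, pow_succ', mul_comm 2, mul_assoc, mul_div_mul_left _ _ (by positivity),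
    div_le_iff₀ (by positivity)]
  nlinarith

theorem limsup_lower_bound
    (a : ℕ → ℕ)
    (ha : ∀ n, a n = ∑ s ∈ Finset.Icc 1 (n - 1), 2 ^ s * ((n - 1).choose s) ^ 2) :
    3 + 2 * Real.sqrt 2 ≤
      Filter.limsup (fun n : ℕ => (a n : ℝ) ^ (1 / (n : ℝ))) Filter.atTop ∧
    Filter.Tendsto (fun n : ℕ => (a n : ℝ) ^ (1 / (n : ℝ))) Filter.atTop
      (nhds (3 + 2 * Real.sqrt 2)) := by
  have hc : (1 : ℝ) ≤ 3 + 2 * √2 := by have := sqrt_nonneg 2; linarith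
  have ha_succ (m : ℕ) :
      (a (m + 1) : ℝ) = ∑ s ∈ range (m + 1), 2 ^ s * (m.choose s : ℝ) ^ 2 - 1 := by
    rw [ha, Nat.add_sub_cancel, range_eq_Ico, sum_eq_sum_Ico_succ_bot m.succ_pos, zero_add,
      Nat.succ_eq_add_one, Ico_add_one_right_eq_Icc]
    push_cast
    simp
  have hup : ∀ᶠ n in atTop, (a n : ℝ) ≤ (3 + 2 * √2) ^ n := by
    filter_upwards [eventually_ge_atTop 1] with n hn
    obtain ⟨m, rfl⟩ := Nat.exists_eq_add_of_le' hn
    rw [ha_succ]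
    linarith [sum_two_pow_mul_choose_sq_le m, pow_le_pow_right₀ hc (Nat.le_add_right m 1)]
  have hlow : ∀ᶠ n in atTop, (3 + 2 * √2) ^ n / (2 * (3 + 2 * √2) * n) ≤ a n := by
    filter_upwards [eventually_ge_atTop 2] with n hn
    obtain ⟨m, rfl⟩ := Nat.exists_eq_add_of_le' (by omega : 1 ≤ n)
    rw [ha_succ]
    exact pow_div_le_sum_two_pow_mul_choose_sq_sub_one (by omega)
  have hlim := tendsto_rpow_one_div_of_pow_div_le_of_le_pow (by positivity) (by positivity) hlow hup
  exact ⟨hlim.limsup_eq.ge, hlim⟩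
end

section
/- In D∞ = ℤ ⋊ {±1}, let S = {(a₁,b₁),…,(a_k,b_k)} with the a_i chosen so that distinct integer combinations Σ m_i a_i with Σ|m_i| ≤ n are distinct. Then the map φ : S^n → ℤ^k sending a product s^{f(1)}⋯s^{f(n)} to its multiplicity vector (m_f(1),…,m_f(k)), where m_f(i) = Σ_{j∈f⁻¹(i)} ∏_{t<j} b_{f(t)}, is well-defined (independent of the representing function f) and injective. -/
open Finset

/-- Multiplication in the infinite dihedral group realized on pairs `(a, b)`
with `a ∈ ℤ` and `b ∈ {1, -1}`: `(a₁,b₁)(a₂,b₂) = (a₁ + b₁a₂, b₁b₂)`. -/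
def dihedralMul (x y : ℤ × ℤ) : ℤ × ℤ := (x.1 + x.2 * y.1, x.2 * y.2)

/-- The product `s^{(f(1))} ⋯ s^{(f(n))}` in the dihedral group, where
`s^{(i)} = (a i, b i)`. -/
def dihedralWord {k n : ℕ} (a b : Fin k → ℤ) (f : Fin n → Fin k) : ℤ × ℤ :=
  (List.ofFn (fun j : Fin n => (a (f j), b (f j)))).foldr dihedralMul (0, 1)

/-- The signed multiplicity `m_f(i) = ∑_{j ∈ f⁻¹(i)} ∏_{t < j} b_{f(t)}`. -/
def signedMult {n k : ℕ} (b : Fin k → ℤ) (f : Fin n → Fin k) (i : Fin k) : ℤ :=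
  ∑ j ∈ Finset.univ.filter (fun j => f j = i), ∏ t ∈ Finset.Iio j, b (f t)

lemma signedMult_succ {n k : ℕ} (b : Fin k → ℤ) (f : Fin (n+1) → Fin k) (i : Fin k) :
    signedMult b f i
      = (if f 0 = i then 1 else 0) + b (f 0) * signedMult b (f ∘ Fin.succ) i := by
  unfold signedMult
  rw [Finset.sum_filter, Finset.sum_filter, Fin.sum_univ_succ]
  have e0 : (if f 0 = i then ∏ t ∈ Finset.Iio (0 : Fin (n+1)), b (f t) else 0)
      = (if f 0 = i then 1 else 0) := by
    have : Finset.Iio (0 : Fin (n+1)) = ∅ := by ext t; simp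
    simp [this]
  rw [e0]
  congr 1
  rw [Finset.mul_sum]
  apply Finset.sum_congr rfl
  intro j _
  have hIio : ∏ t ∈ Finset.Iio (Fin.succ j), b (f t)
      = b (f 0) * ∏ t ∈ Finset.Iio j, b ((f ∘ Fin.succ) t) := by
    have h1 : Finset.Iio (Fin.succ j) = Finset.univ.filter (· < Fin.succ j) := by
      ext t; simp
    have h2 : Finset.Iio j = Finset.univ.filter (· < j) := by
      ext t; simp
    rw [h1, h2, Finset.prod_filter, Finset.prod_filter, Fin.prod_univ_succ]
    simp [Fin.succ_lt_succ_iff, Fin.succ_pos]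
  rw [hIio]
  by_cases h : f (Fin.succ j) = i <;> simp [h, Function.comp]

lemma word_eq {k : ℕ} (a b : Fin k → ℤ) : ∀ {n : ℕ} (f : Fin n → Fin k),
    dihedralWord a b f
      = (∑ i, a i * signedMult b f i, 1 + ∑ i, (b i - 1) * signedMult b f i) := by
  intro n
  induction n with
  | zero => intro f; simp [dihedralWord, signedMult]
  | succ n ih =>
    intro f
    have hw : dihedralWord a b f
        = dihedralMul (a (f 0), b (f 0)) (dihedralWord a b (f ∘ Fin.succ)) := by
      simp [dihedralWord, List.ofFn_succ, Function.comp]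
    rw [hw, ih]
    have hs : ∀ i, signedMult b f i
        = (if f 0 = i then 1 else 0) + b (f 0) * signedMult b (f ∘ Fin.succ) i :=
      signedMult_succ b f
    simp only [dihedralMul, hs, mul_add, Finset.sum_add_distrib, Prod.mk.injEq]
    constructor
    · rw [Finset.mul_sum]
      have : ∑ i, a i * (if f 0 = i then 1 else 0) = a (f 0) := by
        simp [mul_ite, Finset.sum_ite_eq]
      rw [this]
      congr 1
      apply Finset.sum_congr rfl
      intros; ring
    · have e1 : ∑ i, (b i - 1) * (if f 0 = i then 1 else 0) = b (f 0) - 1 := by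
        simp [mul_ite, Finset.sum_ite_eq]
      have e2 : ∑ i, (b i - 1) * (b (f 0) * signedMult b (f ∘ Fin.succ) i)
          = b (f 0) * ∑ i, (b i - 1) * signedMult b (f ∘ Fin.succ) i := by
        rw [Finset.mul_sum]; apply Finset.sum_congr rfl; intros; ring
      rw [e1, e2]; ring

theorem multiplicity_vector_well_defined_and_injective
    (k n : ℕ) (a b : Fin k → ℤ) (hb : ∀ i, b i = 1 ∨ b i = -1)
    (hgen : ∀ u v : Fin k → ℤ,
      (∑ i, |u i|) ≤ (n : ℤ) → (∑ i, |v i|) ≤ (n : ℤ) →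
      (∑ i, a i * u i) = (∑ i, a i * v i) → u = v) :
    ∀ f g : Fin n → Fin k,
      dihedralWord a b f = dihedralWord a b g ↔ signedMult b f = signedMult b g := by
  have hbound : ∀ f : Fin n → Fin k, (∑ i, |signedMult b f i|) ≤ (n : ℤ) := by
    intro f
    have h1 : ∀ i : Fin k, |signedMult b f i|
        ≤ ((Finset.univ.filter (fun j => f j = i)).card : ℤ) := by
      intro i
      calc |signedMult b f i|
          ≤ ∑ j ∈ Finset.univ.filter (fun j => f j = i), |∏ t ∈ Finset.Iio j, b (f t)| :=
            Finset.abs_sum_le_sum_abs _ _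
        _ ≤ ∑ j ∈ Finset.univ.filter (fun j => f j = i), 1 := by
            apply Finset.sum_le_sum
            intro j _
            rw [Finset.abs_prod]
            have : ∀ t ∈ Finset.Iio j, |b (f t)| = 1 := by
              intro t _
              rcases hb (f t) with h | h <;> simp [h]
            rw [Finset.prod_congr rfl this]
            simp
        _ = _ := by simp
    calc ∑ i, |signedMult b f i|
        ≤ ∑ i, ((Finset.univ.filter (fun j => f j = i)).card : ℤ) :=
          Finset.sum_le_sum (fun i _ => h1 i)
      _ = (n : ℤ) := by
          rw [← Nat.cast_sum]
          norm_cast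
          rw [← Finset.card_eq_sum_card_fiberwise (f := f) (fun x _ => Finset.mem_univ _)]
          simp
  intro f g
  constructor
  · intro h
    rw [word_eq, word_eq] at h
    have h1 : (∑ i, a i * signedMult b f i) = ∑ i, a i * signedMult b g i :=
      congrArg Prod.fst h
    exact hgen _ _ (hbound f) (hbound g) h1
  · intro h
    rw [word_eq, word_eq, h]
end

section
/- Let b₁ = ⋯ = b_p = -1 and b_{p+1} = ⋯ = b_k = +1 with 1 ≤ p ≤ k, and let f : {1,…,n} → {1,…,k}. Set m_f(i) = Σ_{j ∈ f⁻¹(i)} ∏_{t=1}^{j-1} b_{f(t)} and q = Σ_{i=1}^{p} |m_f(i)|. Then Σ_{i ≤ p, m_f(i) > 0} m_f(i) = ⌈q/2⌉ and Σ_{i ≤ p, m_f(i) ≤ 0} |m_f(i)| = ⌊q/2⌋. -/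
open Finset

lemma alt_sum {n : ℕ} (A : Finset (Fin n)) :
    ∑ j ∈ A, (-1 : ℤ) ^ ((A ∩ Finset.Iio j).card) = if Even A.card then 0 else 1 := by
  induction A using Finset.strongInduction with
  | _ A ih =>
    rcases A.eq_empty_or_nonempty with rfl | hne
    · simp
    · have hMA : A.max' hne ∈ A := A.max'_mem hne
      set M := A.max' hne with hM
      have hA : A = insert M (A.erase M) := (Finset.insert_erase hMA).symm
      have h1 : ∀ j ∈ A.erase M, (A ∩ Finset.Iio j) = (A.erase M ∩ Finset.Iio j) := by
        intro j hj
        have hjM : j < M :=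
          lt_of_le_of_ne (A.le_max' j (Finset.mem_of_mem_erase hj)) (Finset.ne_of_mem_erase hj)
        ext t
        simp only [Finset.mem_inter, Finset.mem_Iio, Finset.mem_erase]
        constructor
        · rintro ⟨ht, htj⟩
          exact ⟨⟨fun h => absurd htj (by simp [h, not_lt.2 hjM.le]), ht⟩, htj⟩
        · rintro ⟨⟨_, ht⟩, htj⟩; exact ⟨ht, htj⟩
      have h2 : (A ∩ Finset.Iio M) = A.erase M := by
        ext t
        simp only [Finset.mem_inter, Finset.mem_Iio, Finset.mem_erase]
        constructor
        · rintro ⟨ht, htM⟩; exact ⟨ne_of_lt htM, ht⟩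
        · rintro ⟨htne, ht⟩
          exact ⟨ht, lt_of_le_of_ne (A.le_max' t ht) htne⟩
      rw [hA, Finset.sum_insert (Finset.notMem_erase _ _)]
      rw [← hA, h2, Finset.sum_congr rfl (fun j hj => by rw [h1 j hj])]
      rw [ih (A.erase M) (Finset.erase_ssubset hMA)]
      have hcard : (A.erase M).card = A.card - 1 := Finset.card_erase_of_mem hMA
      have hpos : 1 ≤ A.card := Finset.card_pos.2 hne
      rcases Nat.even_or_odd A.card with he | ho
      · have h3 : ¬ Even (A.erase M).card := by
          rw [hcard]
          rcases he with ⟨c, hc⟩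
          rintro ⟨d, hd⟩; omega
        rw [if_neg h3, if_pos he, hcard]
        have : Odd (A.card - 1) := Nat.Even.sub_odd hpos he odd_one
        rw [Odd.neg_one_pow this]; ring
      · have h3 : Even (A.erase M).card := by
          rw [hcard]
          rcases ho with ⟨c, hc⟩
          exact ⟨c, by omega⟩
        rw [if_pos h3, if_neg (Nat.not_even_iff_odd.2 ho), hcard]
        rw [Even.neg_one_pow (by rw [← hcard]; exact h3)]; ring

theorem reflection_multiplicities_balanced
    (k n p : ℕ) (hp : 1 ≤ p) (hpk : p ≤ k)
    (b : Fin k → ℤ) (hb : ∀ i : Fin k, b i = if (i : ℕ) < p then -1 else 1)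
    (f : Fin n → Fin k)
    (q : ℤ)
    (hq : q = ∑ i ∈ Finset.univ.filter (fun i : Fin k => (i : ℕ) < p),
      |signedMult b f i|) :
    (∑ i ∈ Finset.univ.filter
        (fun i : Fin k => (i : ℕ) < p ∧ 0 < signedMult b f i),
      signedMult b f i) = (q + 1) / 2 ∧
    (∑ i ∈ Finset.univ.filter
        (fun i : Fin k => (i : ℕ) < p ∧ signedMult b f i ≤ 0),
      |signedMult b f i|) = q / 2 := by
  classical
  set m := signedMult b f with hm
  set T : Finset (Fin k) := Finset.univ.filter (fun i : Fin k => (i : ℕ) < p) with hT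
  set A : Finset (Fin n) := Finset.univ.filter (fun j : Fin n => ((f j : ℕ) < p)) with hA
  -- product formula
  have hprod : ∀ j : Fin n, ∏ t ∈ Finset.Iio j, b (f t)
      = (-1 : ℤ) ^ ((A ∩ Finset.Iio j).card) := by
    intro j
    have hAI : A ∩ Finset.Iio j = (Finset.Iio j).filter (fun t => (f t : ℕ) < p) := by
      ext t; simp [hA, and_comm]
    rw [hAI, Finset.prod_congr rfl (fun t _ => hb (f t)), Finset.prod_ite,
      Finset.prod_const, Finset.prod_const, one_pow, mul_one]
  -- total signed sum S
  have hS : ∑ i ∈ T, m i = if Even A.card then 0 else 1 := by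
    rw [hm]
    unfold signedMult
    rw [Finset.sum_fiberwise_eq_sum_filter Finset.univ T f
      (fun j => ∏ t ∈ Finset.Iio j, b (f t))]
    have : Finset.univ.filter (fun j : Fin n => f j ∈ T) = A := by
      ext j; simp [hT, hA]
    rw [this, Finset.sum_congr rfl (fun j _ => hprod j), alt_sum]
  have hS01 : (∑ i ∈ T, m i) = 0 ∨ (∑ i ∈ T, m i) = 1 := by
    rw [hS]; split <;> simp
  -- split T by sign of m
  have hfilter_pos : Finset.univ.filter (fun i : Fin k => (i : ℕ) < p ∧ 0 < m i)
      = T.filter (fun i => 0 < m i) := by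
    rw [hT, Finset.filter_filter]
  have hfilter_neg : Finset.univ.filter (fun i : Fin k => (i : ℕ) < p ∧ m i ≤ 0)
      = T.filter (fun i => ¬ 0 < m i) := by
    rw [hT, Finset.filter_filter]
    congr 1; ext i; simp [not_lt]
  set P := ∑ i ∈ T.filter (fun i => 0 < m i), m i with hP
  set N := ∑ i ∈ T.filter (fun i => ¬ 0 < m i), |m i| with hN
  have hqPN : q = P + N := by
    rw [hq, ← Finset.sum_filter_add_sum_filter_not T (fun i => 0 < m i)]
    congr 1
    exact Finset.sum_congr rfl (fun i hi => abs_of_pos (Finset.mem_filter.1 hi).2)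
  have hSPN : ∑ i ∈ T, m i = P - N := by
    rw [← Finset.sum_filter_add_sum_filter_not T (fun i => 0 < m i) m]
    have : ∑ i ∈ T.filter (fun i => ¬ 0 < m i), m i = -N := by
      rw [hN, ← Finset.sum_neg_distrib]
      exact Finset.sum_congr rfl (fun i hi => by
        rw [abs_of_nonpos (not_lt.1 (Finset.mem_filter.1 hi).2)]; ring)
    rw [this]; ring
  rw [hfilter_pos, hfilter_neg, ← hP, ← hN]
  rw [hSPN] at hS01
  constructor <;> omega
end

section
/- Let b₁ = ⋯ = b_p = -1 and b_{p+1} = ⋯ = b_k = +1 (1 ≤ p ≤ k), and f : {1,…,n} → {1,…,k} with multiplicities m_f(i) = Σ_{j ∈ f⁻¹(i)} ∏_{t<j} b_{f(t)}. If Σ_{i=1}^{p}|m_f(i)| = 0 and Σ_{i=1}^{k}|m_f(i)| = n, then m_f(i) ≥ 0 for all i ∈ {p+1,…,k}. -/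
open Finset

theorem translation_multiplicities_nonneg
    (k n p : ℕ) (hp : 1 ≤ p) (hpk : p ≤ k)
    (b : Fin k → ℤ) (hb : ∀ i : Fin k, b i = if (i : ℕ) < p then -1 else 1)
    (f : Fin n → Fin k)
    (h0 : (∑ i ∈ Finset.univ.filter (fun i : Fin k => (i : ℕ) < p),
      |signedMult b f i|) = 0)
    (hn : (∑ i : Fin k, |signedMult b f i|) = (n : ℤ)) :
    ∀ i : Fin k, p ≤ (i : ℕ) → 0 ≤ signedMult b f i := by
  have habs1 : ∀ j : Fin n, |∏ t ∈ Finset.Iio j, b (f t)| = 1 := by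
    intro j
    rw [Finset.abs_prod]
    apply Finset.prod_eq_one
    intro t _
    rw [hb (f t)]
    split_ifs <;> norm_num
  have hle : ∀ i : Fin k,
      |signedMult b f i| ≤ ((Finset.univ.filter (fun j => f j = i)).card : ℤ) := by
    intro i
    unfold signedMult
    calc |∑ j ∈ Finset.univ.filter (fun j => f j = i), ∏ t ∈ Finset.Iio j, b (f t)|
        ≤ ∑ j ∈ Finset.univ.filter (fun j => f j = i), |∏ t ∈ Finset.Iio j, b (f t)| :=
          Finset.abs_sum_le_sum_abs _ _
      _ = ((Finset.univ.filter (fun j => f j = i)).card : ℤ) := by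
          simp [habs1]
  have hcard : ∑ i : Fin k, ((Finset.univ.filter (fun j => f j = i)).card : ℤ) = (n : ℤ) := by
    have h := Finset.card_eq_sum_card_fiberwise
      (s := (Finset.univ : Finset (Fin n))) (t := Finset.univ) (f := f)
      (fun x _ => Finset.mem_univ _)
    rw [Finset.card_univ, Fintype.card_fin] at h
    exact_mod_cast congrArg (Nat.cast : ℕ → ℤ) h.symm
  have hdiff : ∑ i : Fin k,
      (((Finset.univ.filter (fun j => f j = i)).card : ℤ) - |signedMult b f i|) = 0 := by
    rw [Finset.sum_sub_distrib, hcard, hn, sub_self]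
  have heq : ∀ i : Fin k,
      |signedMult b f i| = ((Finset.univ.filter (fun j => f j = i)).card : ℤ) := by
    intro i
    have := (Finset.sum_eq_zero_iff_of_nonneg (fun i _ => sub_nonneg.mpr (hle i))).mp hdiff
      i (Finset.mem_univ i)
    linarith
  have hzero : ∀ i : Fin k, (i : ℕ) < p → |signedMult b f i| = 0 := by
    intro i hi
    exact (Finset.sum_eq_zero_iff_of_nonneg (fun i _ => abs_nonneg _)).mp h0 i
      (Finset.mem_filter.mpr ⟨Finset.mem_univ _, hi⟩)
  have hfib : ∀ t : Fin n, ¬ ((f t : ℕ) < p) := by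
    intro t ht
    have h1 : ((Finset.univ.filter (fun j => f j = f t)).card : ℤ) = 0 := by
      rw [← heq (f t), hzero (f t) ht]
    have h2 : t ∈ Finset.univ.filter (fun j => f j = f t) := by simp
    have : (Finset.univ.filter (fun j => f j = f t)).card ≠ 0 :=
      Finset.card_ne_zero_of_mem h2
    omega
  intro i _
  unfold signedMult
  apply Finset.sum_nonneg
  intro j _
  apply Finset.prod_nonneg
  intro t _
  rw [hb (f t)]
  split_ifs with h
  · exact absurd h (hfib t)
  · norm_num
end
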